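/- arXiv:2602.21614 — 8 statements merged into one kernel-verified Lean document; each statement's English description precedes it below -/
import Mathlib

section
/- Let G ≥ 1 and let A_1, …, A_G > 0 and P_t > 0 be real numbers. Define γ* = 1 / ( (∑_{g=1}^G (1 + 1/(P_t · A_g))) − 1 ) and, for each g, define P_g = γ*·(P_t + 1/A_g)/(1 + γ*). Then (i) all P_g are positive, (ii) ∑_{g=1}^G P_g = P_t, and (iii) for every g, P_g · A_g / ((P_t − P_g)·A_g + 1) = γ*; that is, this power allocation exhausts the power budget and equalizes all group SINRs at the value γ*. -/
/-!
Solving `γ_g = γ` for `P_g` gives `P_g (1 + γ) A_g = γ (P_t A_g + 1)`, i.e. the stated allocation,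
for any common value `γ`. Summing over `g`, the budget `∑ P_g = P_t` holds exactly when
`γ (S - 1) = 1` with `S = ∑ (1 + 1/(P_t A_g))`, and `S > 1` makes this `γ` positive.
-/

open Finset

/-- The paper's `γ_g(p)`, for a group with bottleneck ratio `a` and power `p` out of `Pt`. -/
noncomputable def tinSINR (Pt p a : ℝ) : ℝ := p * a / ((Pt - p) * a + 1)

lemma tinSINR_eq {Pt a γ p : ℝ} (ha : a ≠ 0) (hγ : 1 + γ ≠ 0) (hPta : Pt * a + 1 ≠ 0)
    (hp : p = γ * (Pt + 1 / a) / (1 + γ)) : tinSINR Pt p a = γ := by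
  have hden : (Pt - p) * a + 1 = (Pt * a + 1) / (1 + γ) := by
    rw [hp]
    field_simp
    ring
  rw [tinSINR, hden, div_eq_iff (div_ne_zero hPta hγ), hp]
  field_simp

lemma sum_allocation_eq {ι : Type*} {s : Finset ι} {A : ι → ℝ} {Pt γ : ℝ}
    (hA : ∀ g ∈ s, A g ≠ 0) (hPt : Pt ≠ 0) (hγ₁ : 1 + γ ≠ 0)
    (hγ : γ * ((∑ g ∈ s, (1 + 1 / (Pt * A g))) - 1) = 1) :
    ∑ g ∈ s, γ * (Pt + 1 / A g) / (1 + γ) = Pt := by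
  have hPtS : ∑ g ∈ s, (Pt + 1 / A g) = Pt * ∑ g ∈ s, (1 + 1 / (Pt * A g)) := by
    rw [mul_sum]
    refine sum_congr rfl fun g hg => ?_
    field_simp [hA g hg]
  rw [← sum_div, ← mul_sum, hPtS, div_eq_iff hγ₁]
  linear_combination Pt * hγ

lemma one_lt_sum_of_one_lt {ι : Type*} {s : Finset ι} {f : ι → ℝ} (hs : s.Nonempty)
    (hf : ∀ i ∈ s, 1 < f i) : 1 < ∑ i ∈ s, f i := by
  obtain ⟨i, hi⟩ := hs
  exact (hf i hi).trans_le <| single_le_sum (fun j hj => (zero_lt_one.trans (hf j hj)).le) hi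

/-- TIN optimal power allocation: the closed-form allocation is positive,
exhausts the power budget, and equalizes all group SINRs at `γ`. -/
theorem tin_closed_form_power_allocation
    (G : ℕ) (hG : 1 ≤ G) (A : Fin G → ℝ) (hA : ∀ g, 0 < A g)
    (Pt : ℝ) (hPt : 0 < Pt)
    (γ : ℝ) (hγ : γ = 1 / ((∑ g, (1 + 1 / (Pt * A g))) - 1))
    (P : Fin G → ℝ) (hP : ∀ g, P g = γ * (Pt + 1 / A g) / (1 + γ)) :
    (∀ g, 0 < P g) ∧ (∑ g, P g) = Pt ∧
      (∀ g, P g * A g / ((Pt - P g) * A g + 1) = γ) := by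
  have hS : 1 < ∑ g, (1 + 1 / (Pt * A g)) :=
    one_lt_sum_of_one_lt ⟨⟨0, hG⟩, mem_univ _⟩ fun g _ =>
      lt_add_of_pos_right 1 (one_div_pos.mpr (mul_pos hPt (hA g)))
  have hγ_pos : 0 < γ := hγ ▸ one_div_pos.mpr (sub_pos.mpr hS)
  have hγ_root : γ * ((∑ g, (1 + 1 / (Pt * A g))) - 1) = 1 :=
    hγ ▸ one_div_mul_cancel (sub_pos.mpr hS).ne'
  refine ⟨fun g => ?_, ?_, fun g => ?_⟩
  · have := hA g
    rw [hP g]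
    positivity
  · rw [sum_congr rfl fun g _ => hP g]
    exact sum_allocation_eq (fun g _ => (hA g).ne') hPt.ne' (by positivity) hγ_root
  · have := hA g
    exact tinSINR_eq this.ne' (by positivity) (by positivity) (hP g)
end

section
/- Let G ≥ 1, A_1, …, A_G > 0 and P_t > 0. Then the maximum over all power allocations (P_1,…,P_G) with P_g ≥ 0 and ∑_{g=1}^G P_g ≤ P_t of the quantity min_{1 ≤ g ≤ G} P_g·A_g / (∑_{j ≠ g} P_j·A_g + 1) equals γ* = 1 / ( (∑_{g=1}^G (1 + 1/(P_t · A_g))) − 1 ), and it is attained at P_g = γ*·(P_t + 1/A_g)/(1 + γ*). -/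
/-!
Write `S = ∑ P` and `c = ∑ 1 / A_g`. If every SINR is at least `m`, then
`m (S - P_g + 1 / A_g) ≤ P_g` for each group; summing over the `G` groups gives
`m ((G - 1) S + c) ≤ S`, so `m ≤ S / ((G - 1) S + c) ≤ P_t / ((G - 1) P_t + c) = γ*`,
the last function being increasing in `S`. Conversely, at the closed-form allocation the
whole budget is used and the interference-plus-noise term of every group equals
`(P_t A_g + 1) / (1 + γ*)`, so every SINR equals `γ*`.
-/

open Finset

lemma div_mul_add_le_div_mul_add {a c s t : ℝ} (ha : 0 ≤ a) (hc : 0 < c) (hs : 0 ≤ s)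
    (hst : s ≤ t) : s / (a * s + c) ≤ t / (a * t + c) := by
  rw [div_le_div_iff₀ (add_pos_of_nonneg_of_pos (mul_nonneg ha hs) hc)
    (add_pos_of_nonneg_of_pos (mul_nonneg ha (hs.trans hst)) hc)]
  nlinarith [mul_le_mul_of_nonneg_right hst hc.le]

namespace TIN

variable {ι : Type*} [Fintype ι]

section Sinr

variable [DecidableEq ι]

noncomputable def sinr (P A : ι → ℝ) (g : ι) : ℝ :=
  P g * A g / ((∑ j ∈ univ.erase g, P j) * A g + 1)

lemma sinr_eq (P A : ι → ℝ) (g : ι) :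
    sinr P A g = P g * A g / ((∑ j, P j - P g) * A g + 1) := by
  rw [sinr, sum_erase_eq_sub (mem_univ g)]

lemma mul_interference_le_of_le_sinr {P A : ι → ℝ} {g : ι} {m : ℝ} (hP : ∀ j, 0 ≤ P j)
    (hA : 0 < A g) (h : m ≤ sinr P A g) : m * (∑ j, P j - P g + 1 / A g) ≤ P g := by
  have hI : 0 ≤ ∑ j, P j - P g := by
    rw [← sum_erase_eq_sub (mem_univ g)]
    exact sum_nonneg fun j _ => hP j
  rw [sinr_eq, le_div_iff₀ (add_pos_of_nonneg_of_pos (mul_nonneg hI hA.le) one_pos)] at h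
  have hscale : m * (∑ j, P j - P g + 1 / A g) = m * ((∑ j, P j - P g) * A g + 1) / A g := by
    field_simp
  rwa [hscale, div_le_iff₀ hA]

lemma mul_sum_le_of_forall_le_sinr {P A : ι → ℝ} {m : ℝ} (hP : ∀ j, 0 ≤ P j)
    (hA : ∀ g, 0 < A g) (h : ∀ g, m ≤ sinr P A g) :
    m * ((Fintype.card ι - 1) * ∑ j, P j + ∑ g, 1 / A g) ≤ ∑ j, P j := by
  calc m * ((Fintype.card ι - 1) * ∑ j, P j + ∑ g, 1 / A g)
      = ∑ g, m * (∑ j, P j - P g + 1 / A g) := by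
        simp only [← mul_sum, sum_add_distrib, sum_sub_distrib, sum_const, card_univ,
          nsmul_eq_mul]
        ring
    _ ≤ ∑ g, P g := sum_le_sum fun g _ => mul_interference_le_of_le_sinr hP (hA g) (h g)

end Sinr

lemma mul_div_sub_mul_add_one_eq {a t γ p : ℝ} (ha : 0 < a) (ht : 0 ≤ t) (hγ : 0 ≤ γ)
    (hp : p = γ * (t + 1 / a) / (1 + γ)) : p * a / ((t - p) * a + 1) = γ := by
  have h1 : 1 + γ ≠ 0 := by positivity
  have h2 : t * a + 1 ≠ 0 := by positivity
  have hden : (t - p) * a + 1 = (t * a + 1) / (1 + γ) := by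
    rw [hp]
    field_simp
    ring
  rw [hden, hp]
  field_simp

noncomputable def mmfValue (A : ι → ℝ) (Pt : ℝ) : ℝ :=
  Pt / ((Fintype.card ι - 1) * Pt + ∑ g, 1 / A g)

noncomputable def mmfAlloc (A : ι → ℝ) (Pt : ℝ) (g : ι) : ℝ :=
  mmfValue A Pt * (Pt + 1 / A g) / (1 + mmfValue A Pt)

lemma one_div_sum_sub_one_eq_mmfValue (A : ι → ℝ) {Pt : ℝ} (hPt : Pt ≠ 0) :
    1 / (∑ g, (1 + 1 / (Pt * A g)) - 1) = mmfValue A Pt := by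
  have hsum : ∑ g, (1 + 1 / (Pt * A g)) - 1 =
      ((Fintype.card ι - 1) * Pt + ∑ g, 1 / A g) / Pt := by
    simp only [sum_add_distrib, sum_const, card_univ, nsmul_eq_mul, mul_one, mul_comm Pt,
      ← div_div, ← sum_div]
    field_simp
    ring
  rw [hsum, one_div_div, mmfValue]

section Nonempty

variable [Nonempty ι] {A : ι → ℝ} {Pt : ℝ}

lemma card_sub_one_nonneg : (0 : ℝ) ≤ Fintype.card ι - 1 := by
  rw [sub_nonneg, Nat.one_le_cast]
  exact Fintype.card_pos

lemma sum_one_div_pos (hA : ∀ g, 0 < A g) : 0 < ∑ g, 1 / A g :=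
  sum_pos (fun g _ => one_div_pos.mpr (hA g)) univ_nonempty

lemma mmfValue_denom_pos (hA : ∀ g, 0 < A g) (hPt : 0 ≤ Pt) :
    0 < (Fintype.card ι - 1) * Pt + ∑ g, 1 / A g :=
  add_pos_of_nonneg_of_pos (mul_nonneg card_sub_one_nonneg hPt) (sum_one_div_pos hA)

lemma mmfValue_pos (hA : ∀ g, 0 < A g) (hPt : 0 < Pt) : 0 < mmfValue A Pt :=
  div_pos hPt (mmfValue_denom_pos hA hPt.le)

lemma le_mmfValue [DecidableEq ι] {P : ι → ℝ} {m : ℝ} (hP : ∀ j, 0 ≤ P j)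
    (hA : ∀ g, 0 < A g) (hPt : ∑ j, P j ≤ Pt) (h : ∀ g, m ≤ sinr P A g) :
    m ≤ mmfValue A Pt := by
  have hS : 0 ≤ ∑ j, P j := sum_nonneg fun j _ => hP j
  calc m ≤ (∑ j, P j) / ((Fintype.card ι - 1) * ∑ j, P j + ∑ g, 1 / A g) :=
        (le_div_iff₀ (mmfValue_denom_pos hA hS)).mpr (mul_sum_le_of_forall_le_sinr hP hA h)
    _ ≤ mmfValue A Pt :=
        div_mul_add_le_div_mul_add card_sub_one_nonneg (sum_one_div_pos hA) hS hPt

lemma mmfAlloc_nonneg (hA : ∀ g, 0 < A g) (hPt : 0 < Pt) (g : ι) : 0 ≤ mmfAlloc A Pt g := by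
  have hγ := mmfValue_pos hA hPt
  have hAg := hA g
  unfold mmfAlloc
  positivity

lemma sum_mmfAlloc (hA : ∀ g, 0 < A g) (hPt : 0 < Pt) : ∑ g, mmfAlloc A Pt g = Pt := by
  have hγ := mmfValue_pos hA hPt
  have hγD : mmfValue A Pt * ((Fintype.card ι - 1) * Pt + ∑ g, 1 / A g) = Pt :=
    div_mul_cancel₀ _ (mmfValue_denom_pos hA hPt.le).ne'
  simp only [mmfAlloc, ← sum_div, ← mul_sum, sum_add_distrib, sum_const, card_univ,
    nsmul_eq_mul]
  rw [div_eq_iff (by positivity)]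
  linear_combination hγD

lemma sinr_mmfAlloc [DecidableEq ι] (hA : ∀ g, 0 < A g) (hPt : 0 < Pt) (g : ι) :
    sinr (mmfAlloc A Pt) A g = mmfValue A Pt := by
  rw [sinr_eq, sum_mmfAlloc hA hPt]
  exact mul_div_sub_mul_add_one_eq (hA g) hPt.le (mmfValue_pos hA hPt).le rfl

end Nonempty

end TIN

open TIN in
/-- TIN max-min fairness: the maximum over nonnegative power allocations with
total power at most `Pt` of the minimum group SINR equals `γ*`, and it is
attained at the closed-form allocation `Pstar`. -/
theorem tin_mmf_power_allocation_isGreatest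
    (G : ℕ) (hG : 0 < G) (A : Fin G → ℝ) (hA : ∀ g, 0 < A g)
    (Pt : ℝ) (hPt : 0 < Pt)
    (γ : ℝ) (hγ : γ = 1 / ((∑ g, (1 + 1 / (Pt * A g))) - 1))
    (Pstar : Fin G → ℝ) (hPstar : ∀ g, Pstar g = γ * (Pt + 1 / A g) / (1 + γ)) :
    IsGreatest {m : ℝ | ∃ P : Fin G → ℝ, (∀ g, 0 ≤ P g) ∧ (∑ g, P g) ≤ Pt ∧
        m = Finset.univ.inf' ⟨⟨0, hG⟩, Finset.mem_univ _⟩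
          (fun g => P g * A g / ((∑ j ∈ Finset.univ.erase g, P j) * A g + 1))} γ ∧
      Finset.univ.inf' ⟨⟨0, hG⟩, Finset.mem_univ _⟩
        (fun g => Pstar g * A g / ((∑ j ∈ Finset.univ.erase g, Pstar j) * A g + 1)) = γ := by
  have : Nonempty (Fin G) := ⟨⟨0, hG⟩⟩
  rw [one_div_sum_sub_one_eq_mmfValue A hPt.ne'] at hγ
  subst hγ
  obtain rfl : Pstar = mmfAlloc A Pt := funext hPstar
  have hinf : univ.inf' univ_nonempty (sinr (mmfAlloc A Pt) A) = mmfValue A Pt := by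
    rw [inf'_congr univ_nonempty rfl fun g _ => sinr_mmfAlloc hA hPt g]
    exact inf'_const _ _
  refine ⟨⟨⟨mmfAlloc A Pt, mmfAlloc_nonneg hA hPt, (sum_mmfAlloc hA hPt).le, hinf.symm⟩, ?_⟩,
    hinf⟩
  rintro _ ⟨P, hP, hPt', rfl⟩
  exact le_mmfValue hP hA hPt' fun g => inf'_le (sinr P A) (mem_univ g)
end

section
/- Let G ≥ 2, and let P_1, …, P_G ≥ 0 with at least one P_g > 0, and let ε_1, …, ε_G > 0. Then min_{1 ≤ g ≤ G} P_g / (∑_{j ≠ g} P_j + ε_g) < 1/(G − 1). Consequently, in the TIN multigroup multicast model the minimum achievable group rate min_g log₂(1 + γ_g) is strictly less than log₂(1 + 1/(G−1)) for every feasible power allocation, independently of the channel gains. -/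
/-- TIN interference ceiling: for any feasible power allocation with at least
one positive power, the minimum SINR is strictly less than `1/(G-1)`, and hence
the minimum group rate is strictly less than `log₂(1 + 1/(G-1))`. -/
theorem tin_rate_ceiling
    (G : ℕ) (hG : 2 ≤ G) (P : Fin G → ℝ) (hP : ∀ g, 0 ≤ P g)
    (hpos : ∃ g, 0 < P g) (ε : Fin G → ℝ) (hε : ∀ g, 0 < ε g) :
    Finset.univ.inf' ⟨⟨0, by omega⟩, Finset.mem_univ _⟩
        (fun g => P g / ((∑ j ∈ Finset.univ.erase g, P j) + ε g)) < 1 / ((G : ℝ) - 1) ∧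
    Finset.univ.inf' ⟨⟨0, by omega⟩, Finset.mem_univ _⟩
        (fun g => Real.logb 2 (1 + P g / ((∑ j ∈ Finset.univ.erase g, P j) + ε g)))
      < Real.logb 2 (1 + 1 / ((G : ℝ) - 1)) := by
  have hG1 : (0:ℝ) < (G:ℝ) - 1 := by
    have : (2:ℝ) ≤ (G:ℝ) := by exact_mod_cast hG
    linarith
  set S := ∑ j, P j with hS
  have hSg : ∀ g : Fin G, ∑ j ∈ Finset.univ.erase g, P j = S - P g := fun g =>
    Finset.sum_erase_eq_sub (Finset.mem_univ g)
  have hD : ∀ g : Fin G, 0 < (∑ j ∈ Finset.univ.erase g, P j) + ε g := by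
    intro g
    have h1 : 0 ≤ ∑ j ∈ Finset.univ.erase g, P j :=
      Finset.sum_nonneg (fun j _ => hP j)
    have := hε g; linarith
  have hne : (Finset.univ : Finset (Fin G)).Nonempty := ⟨⟨0, by omega⟩, Finset.mem_univ _⟩
  have hεsum : 0 < ∑ g, ε g := Finset.sum_pos (fun g _ => hε g) hne
  have hmain :
      Finset.univ.inf' ⟨⟨0, by omega⟩, Finset.mem_univ _⟩
        (fun g => P g / ((∑ j ∈ Finset.univ.erase g, P j) + ε g)) < 1 / ((G : ℝ) - 1) := by
    by_contra h
    push_neg at h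
    have key : ∀ g : Fin G, S - P g + ε g ≤ ((G:ℝ) - 1) * P g := by
      intro g
      have h1 : 1 / ((G:ℝ) - 1) ≤ P g / ((∑ j ∈ Finset.univ.erase g, P j) + ε g) :=
        le_trans h (Finset.inf'_le _ (Finset.mem_univ g))
      rw [div_le_div_iff₀ hG1 (hD g)] at h1
      rw [hSg g] at h1
      linarith
    have hsum := Finset.sum_le_sum (fun g (_ : g ∈ Finset.univ) => key g)
    have hcard : (Finset.univ : Finset (Fin G)).card = G := by simp
    rw [Finset.sum_add_distrib, Finset.sum_sub_distrib, Finset.sum_const, hcard,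
      ← Finset.mul_sum] at hsum
    have : (G : ℝ) * S - S + ∑ g, ε g ≤ ((G:ℝ) - 1) * S := by
      have := hsum
      simp only [nsmul_eq_mul] at this
      linarith
    nlinarith
  refine ⟨hmain, ?_⟩
  obtain ⟨g0, _, hg0⟩ := Finset.exists_mem_eq_inf' hne
    (fun g => P g / ((∑ j ∈ Finset.univ.erase g, P j) + ε g))
  have hSINRpos : 0 ≤ P g0 / ((∑ j ∈ Finset.univ.erase g0, P j) + ε g0) :=
    div_nonneg (hP g0) (le_of_lt (hD g0))
  have hlt : P g0 / ((∑ j ∈ Finset.univ.erase g0, P j) + ε g0) < 1 / ((G:ℝ) - 1) := by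
    rw [← hg0]; exact hmain
  calc Finset.univ.inf' ⟨⟨0, by omega⟩, Finset.mem_univ _⟩
        (fun g => Real.logb 2 (1 + P g / ((∑ j ∈ Finset.univ.erase g, P j) + ε g)))
      ≤ Real.logb 2 (1 + P g0 / ((∑ j ∈ Finset.univ.erase g0, P j) + ε g0)) :=
        Finset.inf'_le _ (Finset.mem_univ g0)
    _ < Real.logb 2 (1 + 1 / ((G:ℝ) - 1)) :=
        Real.logb_lt_logb one_lt_two (by linarith) (by linarith)
end

section
/- Let A_s ≥ A_w > 0 and P_t > 0. Define P_s* = ( √((A_s + A_w)² + 4·P_t·A_s·A_w²) − (A_s + A_w) ) / (2·A_s·A_w). Then (i) 0 < P_s* < P_t, and (ii) P_s* is the unique nonnegative solution of the SINR-equalization equation P_s·A_s = (P_t − P_s)·A_w / (P_s·A_w + 1), i.e., with P_w* = P_t − P_s*, the strong group's SNR P_s*·A_s equals the weak group's SINR P_w*·A_w / (P_s*·A_w + 1). -/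
/-- Two-group NOMA: the closed-form strong-group power `Ps` lies strictly
between `0` and `Pt`, and it is the unique nonnegative solution of the
SINR-equalization equation `Ps·As = (Pt − Ps)·Aw / (Ps·Aw + 1)`. -/
theorem noma_two_group_closed_form
    (As Aw Pt : ℝ) (hw : 0 < Aw) (hsw : Aw ≤ As) (hPt : 0 < Pt)
    (Ps : ℝ)
    (hPs : Ps = (Real.sqrt ((As + Aw) ^ 2 + 4 * Pt * As * Aw ^ 2) - (As + Aw))
        / (2 * As * Aw)) :
    (0 < Ps ∧ Ps < Pt) ∧
    Ps * As = (Pt - Ps) * Aw / (Ps * Aw + 1) ∧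
    (∀ x : ℝ, 0 ≤ x → x * As = (Pt - x) * Aw / (x * Aw + 1) → x = Ps) := by
  have hAs : 0 < As := lt_of_lt_of_le hw hsw
  have hD : 0 ≤ (As + Aw) ^ 2 + 4 * Pt * As * Aw ^ 2 := by positivity
  set s := Real.sqrt ((As + Aw) ^ 2 + 4 * Pt * As * Aw ^ 2) with hs
  have hs2 : s ^ 2 = (As + Aw) ^ 2 + 4 * Pt * As * Aw ^ 2 := Real.sq_sqrt hD
  have hslt : As + Aw < s := by
    have h1 : (As + Aw) ^ 2 < s ^ 2 := by nlinarith [mul_pos (mul_pos hPt hAs) (pow_pos hw 2)]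
    nlinarith [Real.sqrt_nonneg ((As + Aw) ^ 2 + 4 * Pt * As * Aw ^ 2)]
  have hden : 0 < 2 * As * Aw := by positivity
  have hPspos : 0 < Ps := by
    rw [hPs]; exact div_pos (by linarith) hden
  -- quadratic equation satisfied by Ps
  have hq : As * Aw * Ps ^ 2 + (As + Aw) * Ps - Pt * Aw = 0 := by
    have h1 : 2 * As * Aw * Ps = s - (As + Aw) := by
      rw [hPs]; field_simp
    have h2 : s = 2 * As * Aw * Ps + (As + Aw) := by linarith
    rw [h2] at hs2
    nlinarith
  have hPsPt : Ps < Pt := by nlinarith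
  have hd1 : (0:ℝ) < Ps * Aw + 1 := by nlinarith
  refine ⟨⟨hPspos, hPsPt⟩, ?_, ?_⟩
  · rw [eq_div_iff (ne_of_gt hd1)]; nlinarith
  · intro x hx heq
    have hd2 : (0:ℝ) < x * Aw + 1 := by nlinarith
    rw [eq_div_iff (ne_of_gt hd2)] at heq
    have hq2 : As * Aw * x ^ 2 + (As + Aw) * x - Pt * Aw = 0 := by nlinarith
    have hfac : (x - Ps) * (As * Aw * (x + Ps) + (As + Aw)) = 0 := by nlinarith
    have hpos : 0 < As * Aw * (x + Ps) + (As + Aw) := by nlinarith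
    rcases mul_eq_zero.1 hfac with h | h
    · linarith
    · linarith
end

section
/- Let A_s ≥ A_w > 0 and P_t > 0. Then the maximum over P_s ∈ [0, P_t] of min{ P_s·A_s , (P_t − P_s)·A_w / (P_s·A_w + 1) } equals γ* = ( √((A_s + A_w)² + 4·P_t·A_s·A_w²) − (A_s + A_w) ) / (2·A_w), and it is attained at P_s* = ( √((A_s + A_w)² + 4·P_t·A_s·A_w²) − (A_s + A_w) ) / (2·A_s·A_w). -/
/-!
The strong-group SNR `p ↦ p·A_s` increases in `p`, while the weak-group SINR
`p ↦ (P_t − p)·A_w / (p·A_w + 1) = (P_t·A_w + 1)/(p·A_w + 1) − 1` decreases, so the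
minimum of the two is largest where they cross. Clearing the denominator, the crossing
condition is the quadratic `A_s·A_w·p² + (A_s + A_w)·p − P_t·A_w = 0`, whose nonnegative
root is `P_s*`; there the common value is `A_s·P_s* = γ*`.
-/

open Set

theorem isGreatest_image_min_of_monotoneOn_of_antitoneOn {α β : Type*} [LinearOrder α]
    [LinearOrder β] {f g : α → β} {s : Set α} {x₀ : α} (hf : MonotoneOn f s)
    (hg : AntitoneOn g s) (hx₀ : x₀ ∈ s) (hfg : f x₀ = g x₀) :
    IsGreatest ((fun x => min (f x) (g x)) '' s) (f x₀) := by
  refine ⟨⟨x₀, hx₀, by simp [hfg]⟩, ?_⟩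
  rintro _ ⟨x, hx, rfl⟩
  rcases le_total x x₀ with hle | hge
  · exact (min_le_left _ _).trans (hf hx hx₀ hle)
  · exact (min_le_right _ _).trans (hfg ▸ hg hx₀ hx hge)

theorem antitoneOn_sub_mul_div_mul_add_one {P A : ℝ} (hP : 0 ≤ P) (hA : 0 ≤ A) :
    AntitoneOn (fun p => (P - p) * A / (p * A + 1)) (Ici 0) := by
  intro p hp q hq hpq
  simp only [mem_Ici] at hp hq
  rw [div_le_div_iff₀ (by positivity) (by positivity)]
  -- the difference of the cross products is `A·(q − p)·(P·A + 1)`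
  nlinarith [mul_nonneg (mul_nonneg hA (sub_nonneg.2 hpq)) (add_nonneg (mul_nonneg hP hA) zero_le_one)]

theorem quadratic_root_spec {a b c : ℝ} (ha : a ≠ 0) (hd : 0 ≤ b ^ 2 + 4 * a * c) :
    a * ((Real.sqrt (b ^ 2 + 4 * a * c) - b) / (2 * a)) ^ 2
      + b * ((Real.sqrt (b ^ 2 + 4 * a * c) - b) / (2 * a)) = c := by
  have hs := Real.sq_sqrt hd
  set s := Real.sqrt (b ^ 2 + 4 * a * c)
  field_simp
  linear_combination hs

theorem quadratic_root_nonneg {a b c : ℝ} (ha : 0 < a) (hc : 0 ≤ c) :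
    0 ≤ (Real.sqrt (b ^ 2 + 4 * a * c) - b) / (2 * a) := by
  have hb : b ≤ Real.sqrt (b ^ 2 + 4 * a * c) :=
    (le_abs_self b).trans (Real.abs_le_sqrt (by nlinarith [mul_nonneg ha.le hc]))
  exact div_nonneg (sub_nonneg.2 hb) (by positivity)

/-- Two-group NOMA max-min: the maximum over `p ∈ [0, Pt]` of
`min (p·As, (Pt−p)·Aw/(p·Aw+1))` equals the closed-form `γ`, and it is
attained at the closed-form power split `Ps`. -/
theorem noma_two_group_mmf_isGreatest
    (As Aw Pt : ℝ) (hw : 0 < Aw) (hsw : Aw ≤ As) (hPt : 0 < Pt)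
    (γ Ps : ℝ)
    (hγ : γ = (Real.sqrt ((As + Aw) ^ 2 + 4 * Pt * As * Aw ^ 2) - (As + Aw))
        / (2 * Aw))
    (hPs : Ps = (Real.sqrt ((As + Aw) ^ 2 + 4 * Pt * As * Aw ^ 2) - (As + Aw))
        / (2 * As * Aw)) :
    IsGreatest {m : ℝ | ∃ p ∈ Set.Icc (0 : ℝ) Pt,
        m = min (p * As) ((Pt - p) * Aw / (p * Aw + 1))} γ ∧
    min (Ps * As) ((Pt - Ps) * Aw / (Ps * Aw + 1)) = γ := by
  have hAs : 0 < As := hw.trans_le hsw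
  have hPs' : Ps = (Real.sqrt ((As + Aw) ^ 2 + 4 * (As * Aw) * (Pt * Aw)) - (As + Aw))
      / (2 * (As * Aw)) := by rw [hPs]; ring_nf
  have hroot : As * Aw * Ps ^ 2 + (As + Aw) * Ps = Pt * Aw :=
    hPs' ▸ quadratic_root_spec (by positivity) (by positivity)
  have hPs0 : 0 ≤ Ps := hPs' ▸ quadratic_root_nonneg (by positivity) (by positivity)
  have hcross : Ps * As = (Pt - Ps) * Aw / (Ps * Aw + 1) := by
    rw [eq_div_iff (by positivity)]; linear_combination hroot
  have hPsPt : Ps ≤ Pt := by nlinarith [mul_nonneg (mul_nonneg hAs.le hw.le) (sq_nonneg Ps)]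
  have hγPs : γ = Ps * As := by rw [hγ, hPs]; field_simp
  have hmax := isGreatest_image_min_of_monotoneOn_of_antitoneOn
    ((monotone_mul_right_of_nonneg hAs.le).monotoneOn _)
    ((antitoneOn_sub_mul_div_mul_add_one hPt.le hw.le).mono Icc_subset_Ici_self)
    ⟨hPs0, hPsPt⟩ hcross
  refine ⟨?_, by rw [← hcross, min_self, hγPs]⟩
  simpa only [hγPs, image, eq_comm] using hmax
end

section
/- Let G ≥ 1, γ > 0, and A_1, …, A_G > 0 (groups indexed in decoding order, group g decoded before group j for g < j). Define S_{G+1} = 0 and, recursively for g = G down to 1, S_g = γ/A_g + (1+γ)·S_{g+1}, and set P_g = S_g − S_{g+1}. Then (i) each P_g > 0, (ii) for every g, the SINR constraint holds with equality: P_g·A_g / (1 + A_g·∑_{j=g+1}^G P_j) = γ, and (iii) the total power satisfies S_1 = ∑_{g=1}^G P_g = ∑_{g=1}^G γ·(1+γ)^{g−1} / A_g. -/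
/-!
Unrolling the backward recursion gives the closed form `S g = ∑_{j ≥ g} (γ / A j) (1 + γ)^(j - g)`,
so every `S g` is nonnegative, and the powers `P g = S g - S (g+1)` telescope:
`∑_{j ≥ g} P j = S g`. Hence `P g = γ / A g + γ S (g+1)` is positive and, the interference seen by
group `g` being `S (g+1)`, its SINR is `(γ + γ A g S (g+1)) / (1 + A g S (g+1)) = γ`.
-/

open Finset

theorem Finset.sum_Icc_sub_succ {M : Type*} [AddCommGroup M] (f : ℕ → M) {m n : ℕ}
    (hmn : m ≤ n + 1) : ∑ i ∈ Icc m n, (f i - f (i + 1)) = f m - f (n + 1) := by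
  rw [← Ico_add_one_right_eq_Icc, ← neg_sub, ← sum_Ico_sub f hmn, ← sum_neg_distrib]
  simp only [neg_sub]

theorem eq_sum_mul_pow_of_backward_rec {R : Type*} [CommSemiring R] {a S : ℕ → R} {c : R}
    {g N : ℕ} (hg : g ≤ N + 1) (hend : S (N + 1) = 0)
    (hrec : ∀ j, g ≤ j → j ≤ N → S j = a j + c * S (j + 1)) :
    S g = ∑ j ∈ Icc g N, a j * c ^ (j - g) := by
  obtain ⟨k, hk⟩ := Nat.exists_eq_add_of_le hg
  induction k generalizing g with
  | zero => simp [← Nat.add_zero g ▸ hk, hend]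
  | succ k ih =>
    have hgN : g ≤ N := by omega
    rw [hrec g le_rfl hgN, ih (by omega) (fun j hj => hrec j (by omega)) (by omega),
      ← insert_Icc_add_one_left_eq_Icc hgN, sum_insert (by simp), mul_sum]
    congr 1
    · simp
    · refine sum_congr rfl fun j hj => ?_
      rw [(by grind : j - g = j - (g + 1) + 1), pow_succ]
      ring

theorem noma_recursive_power_allocation_general
    (G : ℕ) (γ : ℝ) (hγ : 0 < γ)
    (A : ℕ → ℝ) (hA : ∀ g, 1 ≤ g → g ≤ G → 0 < A g)
    (S : ℕ → ℝ) (hSend : S (G + 1) = 0)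
    (hSrec : ∀ g, 1 ≤ g → g ≤ G → S g = γ / A g + (1 + γ) * S (g + 1))
    (P : ℕ → ℝ) (hP : ∀ g, P g = S g - S (g + 1)) :
    (∀ g ∈ Finset.Icc 1 G, 0 < P g) ∧
    (∀ g ∈ Finset.Icc 1 G,
      P g * A g / (1 + A g * ∑ j ∈ Finset.Icc (g + 1) G, P j) = γ) ∧
    S 1 = ∑ g ∈ Finset.Icc 1 G, P g ∧
    S 1 = ∑ g ∈ Finset.Icc 1 G, γ * (1 + γ) ^ (g - 1) / A g := by
  have hS_closed : ∀ g, 1 ≤ g → g ≤ G + 1 →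
      S g = ∑ j ∈ Icc g G, γ / A j * (1 + γ) ^ (j - g) := fun g hg₁ hg =>
    eq_sum_mul_pow_of_backward_rec hg hSend fun j hj hjG => hSrec j (by omega) hjG
  have hS_nonneg : ∀ g, 1 ≤ g → g ≤ G + 1 → 0 ≤ S g := by
    intro g hg₁ hg
    rw [hS_closed g hg₁ hg]
    refine sum_nonneg fun j hj => ?_
    have := hA j (by grind) (mem_Icc.1 hj).2
    positivity
  have hS_tail : ∀ g ≤ G + 1, ∑ j ∈ Icc g G, P j = S g := fun g hg => by
    simp only [hP, sum_Icc_sub_succ S hg, hSend, sub_zero]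
  have hP_eq : ∀ g, 1 ≤ g → g ≤ G → P g = γ / A g + γ * S (g + 1) := fun g hg₁ hg => by
    rw [hP, hSrec g hg₁ hg]
    ring
  refine ⟨fun g hg => ?_, fun g hg => ?_, (hS_tail 1 (by omega)).symm, ?_⟩
  · obtain ⟨hg₁, hg⟩ := mem_Icc.1 hg
    have := hA g hg₁ hg
    have := hS_nonneg (g + 1) (by omega) (by omega)
    rw [hP_eq g hg₁ hg]
    positivity
  · obtain ⟨hg₁, hg⟩ := mem_Icc.1 hg
    have := hA g hg₁ hg
    have := hS_nonneg (g + 1) (by omega) (by omega)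
    rw [hS_tail (g + 1) (by omega), hP_eq g hg₁ hg]
    field_simp
  · simp_rw [hS_closed 1 le_rfl (by omega), mul_div_right_comm]

/-- NOMA recursive power construction: the powers `P g = S g − S (g+1)` defined
by the backward recursion `S g = γ/A g + (1+γ)·S (g+1)` (with `S (G+1) = 0`)
are positive, meet every SINR constraint with equality, and sum to
`S 1 = ∑_{g=1}^G γ·(1+γ)^{g−1}/A g`. -/
theorem noma_recursive_power_allocation
    (G : ℕ) (hG : 1 ≤ G) (γ : ℝ) (hγ : 0 < γ)
    (A : ℕ → ℝ) (hA : ∀ g, 1 ≤ g → g ≤ G → 0 < A g)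
    (S : ℕ → ℝ) (hSend : S (G + 1) = 0)
    (hSrec : ∀ g, 1 ≤ g → g ≤ G → S g = γ / A g + (1 + γ) * S (g + 1))
    (P : ℕ → ℝ) (hP : ∀ g, P g = S g - S (g + 1)) :
    (∀ g ∈ Finset.Icc 1 G, 0 < P g) ∧
    (∀ g ∈ Finset.Icc 1 G,
      P g * A g / (1 + A g * ∑ j ∈ Finset.Icc (g + 1) G, P j) = γ) ∧
    S 1 = ∑ g ∈ Finset.Icc 1 G, P g ∧
    S 1 = ∑ g ∈ Finset.Icc 1 G, γ * (1 + γ) ^ (g - 1) / A g :=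
  noma_recursive_power_allocation_general G γ hγ A hA S hSend hSrec P hP
end

section
/- Let G ≥ 1, γ > 0, and A_1, …, A_G > 0 (groups indexed in decoding order). Suppose the nonnegative powers (P_1, …, P_G) satisfy P_g·A_g / (1 + A_g·∑_{j=g+1}^G P_j) ≥ γ for every g = 1, …, G. Then ∑_{g=1}^G P_g ≥ ∑_{g=1}^G γ·(1+γ)^{g−1} / A_g. Hence P_req(γ) = ∑_{g=1}^G γ·(1+γ)^{g−1} / A_g is the minimum total transmit power needed to support the common SINR target γ. -/
/-- NOMA minimum power: any nonnegative power allocation that meets the common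
SINR target `γ` for every group uses total power at least
`∑_{g=1}^G γ·(1+γ)^{g−1}/A g`. -/
theorem noma_min_required_power
    (G : ℕ) (hG : 1 ≤ G) (γ : ℝ) (hγ : 0 < γ)
    (A : ℕ → ℝ) (hA : ∀ g, 1 ≤ g → g ≤ G → 0 < A g)
    (P : ℕ → ℝ) (hPnn : ∀ g, 1 ≤ g → g ≤ G → 0 ≤ P g)
    (hSINR : ∀ g, 1 ≤ g → g ≤ G →
      γ ≤ P g * A g / (1 + A g * ∑ j ∈ Finset.Icc (g + 1) G, P j)) :
    ∑ g ∈ Finset.Icc 1 G, γ * (1 + γ) ^ (g - 1) / A g ≤ ∑ g ∈ Finset.Icc 1 G, P g := by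
  -- basic facts
  have hSnn : ∀ g : ℕ, 0 ≤ ∑ j ∈ Finset.Icc (g + 1) G, P j := by
    intro g
    apply Finset.sum_nonneg
    intro j hj
    simp only [Finset.mem_Icc] at hj
    exact hPnn j (le_trans (Nat.le_add_left 1 g) hj.1) hj.2
  -- key lower bound on P g : P g ≥ γ/A g + γ * (tail sum)
  have hP : ∀ g, 1 ≤ g → g ≤ G →
      γ / A g + γ * (∑ j ∈ Finset.Icc (g + 1) G, P j) ≤ P g := by
    intro g h1 h2
    have hAg := hA g h1 h2
    set S := ∑ j ∈ Finset.Icc (g + 1) G, P j with hS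
    have hSnn2 : 0 ≤ S := hSnn g
    have hden : 0 < 1 + A g * S := by positivity
    have := hSINR g h1 h2
    rw [le_div_iff₀ hden] at this
    -- γ * (1 + A g * S) ≤ P g * A g
    have h3 : γ / A g + γ * S ≤ P g := by
      rw [div_add' _ _ _ (ne_of_gt hAg), div_le_iff₀ hAg]
      nlinarith
    exact h3
  -- downward induction
  have key : ∀ d : ℕ, ∀ g : ℕ, 1 ≤ g → g + d = G →
      ∑ j ∈ Finset.Icc g G, γ * (1 + γ) ^ (j - g) / A j ≤ ∑ j ∈ Finset.Icc g G, P j := by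
    intro d
    induction d with
    | zero =>
      intro g h1 h2
      have h2' : g = G := by omega
      subst h2'
      simp only [Nat.add_zero, Finset.Icc_self, Finset.sum_singleton, Nat.sub_self, pow_zero,
        mul_one]
      have := hP g h1 le_rfl
      have hempty : Finset.Icc (g + 1) g = (∅ : Finset ℕ) := by
        rw [Finset.Icc_eq_empty_iff]; omega
      rw [hempty] at this
      simpa using this
    | succ d ih =>
      intro g h1 h2
      have hgG : g ≤ G := by omega
      have hsplit : ∀ f : ℕ → ℝ,
          ∑ j ∈ Finset.Icc g G, f j = f g + ∑ j ∈ Finset.Icc (g + 1) G, f j := by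
        intro f
        rw [← Finset.sum_Ioc_add_eq_sum_Icc hgG, ← Finset.Icc_add_one_left_eq_Ioc]
        ring
      rw [hsplit, hsplit]
      have hih := ih (g + 1) (by omega) (by omega)
      have hPg := hP g h1 hgG
      have hpow : ∑ j ∈ Finset.Icc (g + 1) G, γ * (1 + γ) ^ (j - g) / A j
          = (1 + γ) * ∑ j ∈ Finset.Icc (g + 1) G, γ * (1 + γ) ^ (j - (g + 1)) / A j := by
        rw [Finset.mul_sum]
        apply Finset.sum_congr rfl
        intro j hj
        simp only [Finset.mem_Icc] at hj
        have : j - g = (j - (g + 1)) + 1 := by omega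
        rw [this, pow_succ]
        ring
      rw [Nat.sub_self, pow_zero, mul_one, hpow]
      have h1γ : (0:ℝ) < 1 + γ := by linarith
      have := mul_le_mul_of_nonneg_left hih (le_of_lt h1γ)
      have hSnn' := hSnn g
      nlinarith
  have := key (G - 1) 1 le_rfl (by omega)
  simpa using this
end

section
/- Let G ≥ 1, A_1, …, A_G > 0, P_t > 0 and γ > 0. If ∑_{g=1}^G γ·(1+γ)^{g−1} / A_g ≤ P_t, then γ ≤ min_{1 ≤ g ≤ G} (P_t · A_g)^{1/g}; that is, the feasible equalized NOMA SINR is bounded by the minimum over decoding layers g of the g-th root of P_t·A_g. -/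
/-- NOMA high-SNR layer bound: if the SINR target `γ` is feasible under budget
`Pt`, then `γ ≤ min_g (Pt·A g)^(1/g)` where `g` ranges over the decoding
layers `1, …, G`. -/
theorem noma_sinr_le_min_root_bound
    (G : ℕ) (hG : 0 < G) (A : Fin G → ℝ) (hA : ∀ g, 0 < A g)
    (Pt γ : ℝ) (hPt : 0 < Pt) (hγpos : 0 < γ)
    (hfeas : ∑ g : Fin G, γ * (1 + γ) ^ (g : ℕ) / A g ≤ Pt) :
    γ ≤ Finset.univ.inf' ⟨⟨0, hG⟩, Finset.mem_univ _⟩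
        (fun g => (Pt * A g) ^ ((1 : ℝ) / (((g : ℕ) : ℝ) + 1))) := by
  apply Finset.le_inf'
  intro g _
  have hterm : γ * (1 + γ) ^ (g : ℕ) / A g ≤ Pt := by
    refine le_trans ?_ hfeas
    apply Finset.single_le_sum (f := fun g : Fin G => γ * (1 + γ) ^ (g : ℕ) / A g)
      (fun i _ => ?_) (Finset.mem_univ g)
    exact div_nonneg (by positivity) (hA i).le
  have hkey : γ ^ ((g : ℕ) + 1) ≤ Pt * A g := by
    have h1 : γ * (1 + γ) ^ (g : ℕ) ≤ Pt * A g := by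
      rw [div_le_iff₀ (hA g)] at hterm
      linarith
    calc γ ^ ((g : ℕ) + 1) = γ * γ ^ (g : ℕ) := by ring
      _ ≤ γ * (1 + γ) ^ (g : ℕ) := by
          apply mul_le_mul_of_nonneg_left _ hγpos.le
          exact pow_le_pow_left₀ hγpos.le (by linarith) _
      _ ≤ Pt * A g := h1
  have hn : (0:ℝ) < ((g : ℕ) : ℝ) + 1 := by positivity
  have := Real.rpow_le_rpow (by positivity) hkey (le_of_lt (by positivity : (0:ℝ) < 1 / (((g : ℕ) : ℝ) + 1)))
  calc γ = (γ ^ ((g : ℕ) + 1)) ^ ((1 : ℝ) / (((g : ℕ) : ℝ) + 1)) := by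
        rw [← Real.rpow_natCast γ ((g : ℕ) + 1), ← Real.rpow_mul hγpos.le]
        push_cast
        rw [mul_one_div, div_self hn.ne', Real.rpow_one]
    _ ≤ (Pt * A g) ^ ((1 : ℝ) / (((g : ℕ) : ℝ) + 1)) := this
end
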